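/- Let f : Λ → ℝ (Λ the unit torus) satisfy the pointwise bounds |f(x)| ≤ C min(N, (log N)³ N^{κ/4}/|x|^{5/2}) and, for every m ≥ 2, |f(x)| ≤ C_m N (ℓ_σ/|x|)^m with ℓ_σ = N^{−κ/2+β/4}, and suppose ‖f‖₂ ≤ C N^{3κ/4}. Let ℓ_B = N^{−κ/2+β/12}, Λ_B = Λ ∩ ℓ_B ℤ³, and f_u = f·1_{B_u} where B_u is the Voronoi cell of u ∈ Λ_B. Then for every ε > 0 there is C_ε with Σ_{u ∈ Λ_B} ‖f_u‖₂ ≤ C_ε N^{3κ/4 + ε}, for all N large (with κ ∈ (1/2, 2/3), β = 2−3κ). -/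

import Mathlib

open MeasureTheory

/-- The lattice point `t·k ∈ ℝ³` for `k ∈ ℤ³` and spacing `t`. -/
noncomputable def latPt (t : ℝ) (k : Fin 3 → ℤ) : EuclideanSpace ℝ (Fin 3) :=
  WithLp.toLp 2 (fun i => t * (k i : ℝ))

/-- The unit box `Λ = [-1/2,1/2]³`. -/
def unitBox : Set (EuclideanSpace ℝ (Fin 3)) := {x | ∀ i, |x i| ≤ 1/2}

/-- The Voronoi cell of the lattice point `t·k` inside `Λ`, among the lattice points of
spacing `t` lying in `Λ`. -/
def voronoiCell (t : ℝ) (k : Fin 3 → ℤ) : Set (EuclideanSpace ℝ (Fin 3)) :=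
  {x | x ∈ unitBox ∧ ∀ k' : Fin 3 → ℤ, latPt t k' ∈ unitBox →
    ‖x - latPt t k‖ ≤ ‖x - latPt t k'‖}

/-! Every Voronoi cell lies in a ball of radius `2ℓ_B` around its centre `ℓ_B k`, so it has
volume `O(ℓ_B³)` and, when `ν = ‖k‖_∞ + 1 ≥ 6`, stays at distance `≥ ℓ_B ν / 2` from the origin.
Put `e = min ε 1`. Cells with `ν ≤ 6` are bounded by the global `L²` norm, cells with
`6 ≤ ν ≤ N^{β/6+e/4}` by the `|x|^{-5/2}` bound (with `(log N)³ = O(N^{e/4})`), and the remaining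
ones by the `m`-th order decay with `m e ≥ 12`. In every case the cell norm is
`O(N^{3κ/4+e} ν^{-(3+e/4)})`, and this weight is summable over `ℤ³` because it is dominated by
`∏ᵢ |kᵢ + 1/2|^{-(1+e/12)}`. -/

@[simp]
lemma latPt_apply (t : ℝ) (k : Fin 3 → ℤ) (i : Fin 3) : latPt t k i = t * k i := rfl

lemma exists_int_abs_mul_le_abs_and_abs_sub_mul_le {t : ℝ} (ht : 0 < t) (y : ℝ) :
    ∃ j : ℤ, |t * j| ≤ |y| ∧ |y - t * j| ≤ t := by
  wlog hy : 0 ≤ y generalizing y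
  · obtain ⟨j, h₁, h₂⟩ := this (-y) (by linarith)
    refine ⟨-j, by simpa using h₁, ?_⟩
    have hneg : y - t * ((-j : ℤ) : ℝ) = -(-y - t * j) := by push_cast; ring
    rwa [hneg, abs_neg]
  have h₀ : 0 ≤ t * ⌊y / t⌋ := mul_nonneg ht.le (mod_cast Int.floor_nonneg.2 (by positivity))
  have h₁ : t * ⌊y / t⌋ ≤ y := by
    have := Int.floor_le (y / t)
    rw [le_div_iff₀ ht] at this
    linarith
  have h₂ : y < t * ⌊y / t⌋ + t := by
    have := Int.lt_floor_add_one (y / t)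
    rw [div_lt_iff₀ ht] at this
    linarith
  refine ⟨⌊y / t⌋, ?_, ?_⟩
  · rw [abs_of_nonneg h₀, abs_of_nonneg hy]
    exact h₁
  · rw [abs_of_nonneg (by linarith)]
    linarith

lemma norm_le_two_mul_of_forall_abs_le {v : EuclideanSpace ℝ (Fin 3)} {r : ℝ}
    (h : ∀ i, |v i| ≤ r) : ‖v‖ ≤ 2 * r := by
  have hr : 0 ≤ r := (abs_nonneg _).trans (h 0)
  have hsq : ∀ i, ‖v i‖ ^ 2 ≤ r ^ 2 := fun i =>
    pow_le_pow_left₀ (norm_nonneg _) (by simpa using h i) 2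
  rw [EuclideanSpace.norm_eq, Real.sqrt_le_left (by positivity), Fin.sum_univ_three]
  nlinarith [hsq 0, hsq 1, hsq 2]

lemma norm_sub_latPt_le_of_mem_voronoiCell {t : ℝ} (ht : 0 < t) {k : Fin 3 → ℤ}
    {x : EuclideanSpace ℝ (Fin 3)} (hx : x ∈ voronoiCell t k) : ‖x - latPt t k‖ ≤ 2 * t := by
  choose j hj₁ hj₂ using fun i => exists_int_abs_mul_le_abs_and_abs_sub_mul_le ht (x i)
  exact (hx.2 j fun i => (hj₁ i).trans (hx.1 i)).trans
    (norm_le_two_mul_of_forall_abs_le fun i => by simpa using hj₂ i)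

lemma mul_norm_le_norm_add_of_mem_voronoiCell {t : ℝ} (ht : 0 < t) {k : Fin 3 → ℤ}
    {x : EuclideanSpace ℝ (Fin 3)} (hx : x ∈ voronoiCell t k) : t * ‖k‖ ≤ ‖x‖ + 2 * t := by
  rw [← le_div_iff₀' ht, pi_norm_le_iff_of_nonneg (by positivity)]
  intro i
  rw [le_div_iff₀' ht, Int.norm_eq_abs]
  have hcoord := PiLp.norm_apply_le (x - latPt t k) i
  have hxi := PiLp.norm_apply_le x i
  simp only [PiLp.sub_apply, latPt_apply, Real.norm_eq_abs] at hcoord hxi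
  calc t * |(k i : ℝ)| = |t * k i| := by rw [abs_mul, abs_of_pos ht]
    _ ≤ |x i| + |x i - t * k i| := by
        have := abs_sub_abs_le_abs_sub (t * (k i : ℝ)) (x i)
        rw [abs_sub_comm] at this
        linarith
    _ ≤ ‖x‖ + 2 * t := add_le_add hxi (hcoord.trans (norm_sub_latPt_le_of_mem_voronoiCell ht hx))

lemma measurableSet_voronoiCell (t : ℝ) (k : Fin 3 → ℤ) : MeasurableSet (voronoiCell t k) := by
  simp only [voronoiCell, unitBox, Set.ofPred_and, Set.ofPred_forall]
  exact .inter (.iInter fun i => measurableSet_le (by fun_prop) measurable_const)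
    (.iInter fun k' => .iInter fun _ => measurableSet_le (by fun_prop) (by fun_prop))

lemma voronoiCell_subset_closedBall {t : ℝ} (ht : 0 < t) (k : Fin 3 → ℤ) :
    voronoiCell t k ⊆ Metric.closedBall (latPt t k) (2 * t) := fun x hx => by
  rw [Metric.mem_closedBall, dist_eq_norm]
  exact norm_sub_latPt_le_of_mem_voronoiCell ht hx

lemma volume_voronoiCell_ne_top {t : ℝ} (ht : 0 < t) (k : Fin 3 → ℤ) :
    volume (voronoiCell t k) ≠ ⊤ :=
  ((measure_mono (voronoiCell_subset_closedBall ht k)).trans_lt measure_closedBall_lt_top).ne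

lemma volume_real_voronoiCell_le {t : ℝ} (ht : 0 < t) (k : Fin 3 → ℤ) :
    volume.real (voronoiCell t k) ≤ 64 * t ^ 3 := by
  calc volume.real (voronoiCell t k) ≤ volume.real (Metric.closedBall (latPt t k) (2 * t)) :=
        measureReal_mono (voronoiCell_subset_closedBall ht k) measure_closedBall_lt_top.ne
    _ = (2 * t) ^ 3 * (Real.pi * 4 / 3) := by
        rw [Measure.real, EuclideanSpace.volume_closedBall_fin_three, ENNReal.toReal_mul,
          ENNReal.toReal_pow, ENNReal.toReal_ofReal (by positivity),
          ENNReal.toReal_ofReal (by positivity)]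
    _ ≤ 64 * t ^ 3 := by nlinarith [Real.pi_lt_four, pow_pos ht 3]

lemma sqrt_setIntegral_sq_le {α : Type*} [MeasurableSpace α] {μ : Measure α} {s : Set α}
    (hs : MeasurableSet s) (hμs : μ s ≠ ⊤) {f : α → ℝ} {M : ℝ} (hM : 0 ≤ M)
    (hf : ∀ x ∈ s, |f x| ≤ M) : √(∫ x in s, f x ^ 2 ∂μ) ≤ M * √(μ.real s) := by
  -- no measurability of `f` is needed: a non-integrable `f ^ 2` has integral `0`
  have hint : ∫ x in s, f x ^ 2 ∂μ ≤ ∫ _ in s, M ^ 2 ∂μ :=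
    integral_mono_of_nonneg (.of_forall fun x => sq_nonneg _) (integrableOn_const hμs)
      ((ae_restrict_mem hs).mono fun x hx => by
        simpa [sq_abs] using pow_le_pow_left₀ (abs_nonneg (f x)) (hf x hx) 2)
  rw [setIntegral_const, smul_eq_mul] at hint
  calc √(∫ x in s, f x ^ 2 ∂μ) ≤ √(M ^ 2 * μ.real s) := Real.sqrt_le_sqrt (by linarith)
    _ = M * √(μ.real s) := by rw [Real.sqrt_mul (sq_nonneg M), Real.sqrt_sq hM]

lemma unitBox_subset_closedBall : unitBox ⊆ Metric.closedBall 0 1 := fun x hx => by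
  simpa using norm_le_two_mul_of_forall_abs_le hx

lemma sqrt_setIntegral_sq_voronoiCell_le_unitBox {f : EuclideanSpace ℝ (Fin 3) → ℝ}
    (hf : Measurable f) {M : ℝ} (hM : ∀ x, |f x| ≤ M) (t : ℝ) (k : Fin 3 → ℤ) :
    √(∫ x in voronoiCell t k, f x ^ 2) ≤ √(∫ x in unitBox, f x ^ 2) := by
  refine Real.sqrt_le_sqrt (setIntegral_mono_set ?_ (.of_forall fun x => sq_nonneg _)
    (Filter.Eventually.of_forall fun x hx => hx.1))
  refine Measure.integrableOn_of_bounded (M := M ^ 2)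
    ((measure_mono unitBox_subset_closedBall).trans_lt measure_closedBall_lt_top).ne
    (hf.pow_const 2).aestronglyMeasurable (.of_forall fun x => ?_)
  simpa [sq_abs] using pow_le_pow_left₀ (abs_nonneg (f x)) (hM x) 2

lemma rpow_neg_le_rpow_sub_mul_rpow_neg {ν R γ c : ℝ} (hν : 0 < ν) (hR : 0 < R)
    (h : (ν ≤ R ∧ γ ≤ c) ∨ (R ≤ ν ∧ c ≤ γ)) : ν ^ (-γ) ≤ R ^ (c - γ) * ν ^ (-c) := by
  rw [show -γ = (c - γ) + -c by ring, Real.rpow_add hν]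
  refine mul_le_mul_of_nonneg_right ?_ (by positivity)
  rcases h with ⟨hνR, hγc⟩ | ⟨hRν, hcγ⟩
  · exact Real.rpow_le_rpow hν.le hνR (by linarith)
  · exact Real.rpow_le_rpow_of_nonpos hR hRν (by linarith)

lemma sqrt_setIntegral_sq_voronoiCell_le_of_decay {t γ A : ℝ} (ht : 0 < t) (hγ : 0 ≤ γ)
    (hA : 0 ≤ A) {f : EuclideanSpace ℝ (Fin 3) → ℝ} (hf : ∀ x, x ≠ 0 → |f x| ≤ A * ‖x‖ ^ (-γ))
    {k : Fin 3 → ℤ} (hk : 6 ≤ ‖k‖ + 1) {R c : ℝ} (hR₀ : 0 < R)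
    (hR : (‖k‖ + 1 ≤ R ∧ γ ≤ c) ∨ (R ≤ ‖k‖ + 1 ∧ c ≤ γ)) :
    √(∫ x in voronoiCell t k, f x ^ 2)
      ≤ 8 * 2 ^ γ * A * t ^ ((3 : ℝ) / 2 - γ) * R ^ (c - γ) * (‖k‖ + 1) ^ (-c) := by
  set ν := ‖k‖ + 1
  have hρ : 0 < t * ν / 2 := by positivity
  have hbound : ∀ x ∈ voronoiCell t k, |f x| ≤ A * (t * ν / 2) ^ (-γ) := fun x hx => by
    have hx : t * ν / 2 ≤ ‖x‖ := by
      have := mul_norm_le_norm_add_of_mem_voronoiCell ht hx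
      nlinarith
    refine (hf x (norm_pos_iff.1 (hρ.trans_le hx))).trans ?_
    exact mul_le_mul_of_nonneg_left (Real.rpow_le_rpow_of_nonpos hρ hx (by linarith)) hA
  have hsqrt_vol : √(volume.real (voronoiCell t k)) ≤ 8 * t ^ ((3 : ℝ) / 2) := by
    calc √(volume.real (voronoiCell t k)) ≤ √(8 ^ 2 * t ^ (3 : ℝ)) := by
          refine Real.sqrt_le_sqrt ((volume_real_voronoiCell_le ht k).trans_eq ?_)
          norm_num [Real.rpow_natCast]
      _ = 8 * t ^ ((3 : ℝ) / 2) := by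
          rw [Real.sqrt_mul (by norm_num), Real.sqrt_sq (by norm_num), Real.sqrt_eq_rpow,
            ← Real.rpow_mul ht.le]
          norm_num
  have hsplit :
      (t * ν / 2) ^ (-γ) * t ^ ((3 : ℝ) / 2) = 2 ^ γ * t ^ ((3 : ℝ) / 2 - γ) * ν ^ (-γ) := by
    rw [Real.div_rpow (by positivity) zero_le_two, Real.mul_rpow ht.le (by positivity),
      Real.rpow_neg zero_le_two, sub_eq_add_neg, Real.rpow_add ht]
    field_simp
  calc √(∫ x in voronoiCell t k, f x ^ 2)
      ≤ A * (t * ν / 2) ^ (-γ) * √(volume.real (voronoiCell t k)) :=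
        sqrt_setIntegral_sq_le (measurableSet_voronoiCell t k) (volume_voronoiCell_ne_top ht k)
          (by positivity) hbound
    _ ≤ A * (t * ν / 2) ^ (-γ) * (8 * t ^ ((3 : ℝ) / 2)) := by gcongr
    _ = 8 * 2 ^ γ * A * t ^ ((3 : ℝ) / 2 - γ) * ν ^ (-γ) := by linear_combination (8 * A) * hsplit
    _ ≤ 8 * 2 ^ γ * A * t ^ ((3 : ℝ) / 2 - γ) * (R ^ (c - γ) * ν ^ (-c)) := by
        gcongr
        exact rpow_neg_le_rpow_sub_mul_rpow_neg (by positivity) hR₀ hR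
    _ = _ := by ring

lemma sum_prod_le_tsum_pow {ι α : Type*} [Fintype ι] {g : α → ℝ} (hg0 : ∀ a, 0 ≤ g a)
    (hg : Summable g) (u : Finset (ι → α)) :
    ∑ k ∈ u, ∏ i, g (k i) ≤ (∑' a, g a) ^ Fintype.card ι := by
  classical
  calc ∑ k ∈ u, ∏ i, g (k i) ≤ ∑ k ∈ Fintype.piFinset fun i => u.image (· i), ∏ i, g (k i) :=
        Finset.sum_le_sum_of_subset_of_nonneg
          (fun k hk => Fintype.mem_piFinset.2 fun i => Finset.mem_image_of_mem _ hk)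
          (fun _ _ _ => Finset.prod_nonneg fun _ _ => hg0 _)
    _ = ∏ i, ∑ a ∈ u.image (· i), g a := (Finset.prod_univ_sum _ _).symm
    _ ≤ ∏ _i : ι, ∑' a, g a :=
        Finset.prod_le_prod (fun _ _ => Finset.sum_nonneg fun _ _ => hg0 _)
          fun _ _ => hg.sum_le_tsum _ fun _ _ => hg0 _
    _ = (∑' a, g a) ^ Fintype.card ι := by rw [Finset.prod_const, Finset.card_univ]

lemma rpow_neg_le_prod_one_div_abs_add_half {ι : Type*} [Fintype ι] (k : ι → ℤ) {p : ℝ}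
    (hp : 0 ≤ p) : (‖k‖ + 1) ^ (-(Fintype.card ι * p)) ≤ ∏ i, 1 / |(k i : ℝ) + 1 / 2| ^ p := by
  have hν : 0 < ‖k‖ + 1 := by positivity
  have hpow : (‖k‖ + 1) ^ (-(Fintype.card ι * p)) = ∏ _i : ι, 1 / (‖k‖ + 1) ^ p := by
    rw [Finset.prod_const, Finset.card_univ, one_div, inv_pow, Real.rpow_neg hν.le, mul_comm,
      Real.rpow_mul hν.le, Real.rpow_natCast]
  rw [hpow]
  refine Finset.prod_le_prod (fun _ _ => by positivity) fun i _ => ?_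
  have hpos : 0 < |(k i : ℝ) + 1 / 2| := abs_pos.2 fun h => by
    have : (2 * k i + 1 : ℤ) = 0 := by exact_mod_cast (by linarith : 2 * (k i : ℝ) + 1 = 0)
    omega
  have hle : |(k i : ℝ) + 1 / 2| ≤ ‖k‖ + 1 := by
    have := norm_le_pi_norm k i
    rw [Int.norm_eq_abs] at this
    calc |(k i : ℝ) + 1 / 2| ≤ |(k i : ℝ)| + |1 / 2| := abs_add_le _ _
      _ ≤ ‖k‖ + 1 := by rw [abs_of_pos (by norm_num : (0 : ℝ) < 1 / 2)]; linarith
  exact one_div_le_one_div_of_le (by positivity) (Real.rpow_le_rpow hpos.le hle hp)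

lemma tsum_le_of_le_mul_rpow_neg_norm_add_one {ι : Type*} [Fintype ι] [Nonempty ι]
    (P : (ι → ℤ) → Prop) {F : (ι → ℤ) → ℝ} (hF0 : ∀ k, 0 ≤ F k) {B c : ℝ} (hB : 0 ≤ B)
    (hc : Fintype.card ι < c) (hF : ∀ k, F k ≤ B * (‖k‖ + 1) ^ (-c)) :
    ∑' k : {k // P k}, F k
      ≤ B * (∑' j : ℤ, 1 / |(j : ℝ) + 1 / 2| ^ (c / Fintype.card ι)) ^ Fintype.card ι := by
  have hcard : 0 < (Fintype.card ι : ℝ) := by exact_mod_cast Fintype.card_pos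
  set p := c / Fintype.card ι
  have hcp : c = Fintype.card ι * p := (mul_div_cancel₀ c hcard.ne').symm
  have hg : Summable fun j : ℤ => 1 / |(j : ℝ) + 1 / 2| ^ p :=
    (Real.summable_one_div_int_add_rpow _ _).2 ((one_lt_div hcard).2 hc)
  refine Real.tsum_le_of_sum_le (fun k => hF0 k) fun u => ?_
  calc ∑ k ∈ u, F k
      ≤ ∑ k ∈ u.map (Function.Embedding.subtype P), B * ∏ i, 1 / |(k i : ℝ) + 1 / 2| ^ p := by
        rw [Finset.sum_map]
        refine Finset.sum_le_sum fun k _ => (hF k).trans (mul_le_mul_of_nonneg_left ?_ hB)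
        rw [hcp]
        exact rpow_neg_le_prod_one_div_abs_add_half k.1 (div_pos (hcard.trans hc) hcard).le
    _ = B * ∑ k ∈ u.map (Function.Embedding.subtype P), ∏ i, 1 / |(k i : ℝ) + 1 / 2| ^ p :=
        (Finset.mul_sum _ _ _).symm
    _ ≤ _ := mul_le_mul_of_nonneg_left (sum_prod_le_tsum_pow (fun _ => by positivity) hg _) hB

lemma log_pow_le_mul_rpow {x η : ℝ} (hx : 1 ≤ x) (hη : 0 < η) (n : ℕ) :
    Real.log x ^ n ≤ (n / η) ^ n * x ^ η := by
  rcases n.eq_zero_or_pos with rfl | hn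
  · simpa using Real.one_le_rpow hx hη.le
  have hlog := Real.log_le_rpow_div (by linarith : 0 ≤ x) (by positivity : 0 < η / n)
  calc Real.log x ^ n ≤ (x ^ (η / n) / (η / n)) ^ n :=
        pow_le_pow_left₀ (Real.log_nonneg hx) hlog n
    _ = (n / η) ^ n * x ^ η := by
        rw [div_pow, ← Real.rpow_natCast (x ^ (η / n)), ← Real.rpow_mul (by linarith),
          div_mul_cancel₀ _ (by positivity), div_eq_mul_inv, ← inv_pow, inv_div]
        ring

lemma sqrt_setIntegral_sq_voronoiCell_le_of_near {f : EuclideanSpace ℝ (Fin 3) → ℝ}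
    (hf : Measurable f) {M B : ℝ} (hM : ∀ x, |f x| ≤ M)
    (hB : √(∫ x in unitBox, f x ^ 2) ≤ B) {c : ℝ} (hc : 0 ≤ c) (t : ℝ) {k : Fin 3 → ℤ}
    (hk : ‖k‖ + 1 ≤ 6) :
    √(∫ x in voronoiCell t k, f x ^ 2) ≤ 6 ^ c * B * (‖k‖ + 1) ^ (-c) := by
  have hB0 : 0 ≤ B := (Real.sqrt_nonneg _).trans hB
  have hone : 1 ≤ 6 ^ c * (‖k‖ + 1) ^ (-c) := by
    calc (1 : ℝ) = 6 ^ c * 6 ^ (-c) := by rw [← Real.rpow_add (by norm_num), add_neg_cancel,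
          Real.rpow_zero]
      _ ≤ 6 ^ c * (‖k‖ + 1) ^ (-c) := mul_le_mul_of_nonneg_left
          (Real.rpow_le_rpow_of_nonpos (by positivity) hk (by linarith)) (by positivity)
  calc √(∫ x in voronoiCell t k, f x ^ 2) ≤ B :=
        (sqrt_setIntegral_sq_voronoiCell_le_unitBox hf hM t k).trans hB
    _ ≤ B * (6 ^ c * (‖k‖ + 1) ^ (-c)) := le_mul_of_one_le_right hB0 hone
    _ = 6 ^ c * B * (‖k‖ + 1) ^ (-c) := by ring

lemma sqrt_setIntegral_sq_voronoiCell_le_of_mid {κ C e N : ℝ} (hκ1 : 1 / 2 < κ)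
    (hC : 0 ≤ C) (he0 : 0 < e) (he1 : e ≤ 1) (hN : 1 ≤ N) {f : EuclideanSpace ℝ (Fin 3) → ℝ}
    (hf : ∀ x, |f x| ≤ C * min N ((Real.log N)^3 * N^(κ/4) / ‖x‖^((5:ℝ)/2)))
    {k : Fin 3 → ℤ} (hk : 6 ≤ ‖k‖ + 1) (hkR : ‖k‖ + 1 ≤ N ^ ((2 - 3 * κ) / 6 + e / 4)) :
    √(∫ x in voronoiCell (N^(-κ/2 + (2-3*κ)/12)) k, f x ^ 2)
      ≤ 8 * 2 ^ ((5 : ℝ) / 2) * C * (12 / e) ^ 3 * N ^ (3 * κ / 4 + e)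
        * (‖k‖ + 1) ^ (-(3 + e / 4)) := by
  have hN0 : 0 < N := by linarith
  have hdecay : ∀ x, x ≠ 0 →
      |f x| ≤ C * (Real.log N)^3 * N^(κ/4) * ‖x‖ ^ (-((5 : ℝ) / 2)) := fun x _ =>
    (hf x).trans ((mul_le_mul_of_nonneg_left (min_le_right _ _) hC).trans_eq
      (by rw [Real.rpow_neg (norm_nonneg x)]; ring))
  have hexp : N ^ (κ / 4) * (N ^ (-κ/2 + (2-3*κ)/12)) ^ ((3 : ℝ) / 2 - 5 / 2)
      * (N ^ ((2 - 3 * κ) / 6 + e / 4)) ^ (3 + e / 4 - 5 / 2) * N ^ (e / 4)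
        ≤ N ^ (3 * κ / 4 + e) := by
    rw [← Real.rpow_mul hN0.le, ← Real.rpow_mul hN0.le, ← Real.rpow_add hN0,
      ← Real.rpow_add hN0, ← Real.rpow_add hN0]
    refine Real.rpow_le_rpow_of_exponent_le hN ?_
    nlinarith [mul_le_mul_of_nonneg_right (by linarith : 2 - 3 * κ ≤ 1 / 2) he0.le,
      mul_le_mul_of_nonneg_right he1 he0.le]
  have hlog := log_pow_le_mul_rpow hN (by positivity : 0 < e / 4) 3
  calc √(∫ x in voronoiCell (N^(-κ/2 + (2-3*κ)/12)) k, f x ^ 2)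
      ≤ 8 * 2 ^ ((5 : ℝ) / 2) * (C * (Real.log N)^3 * N^(κ/4))
        * (N ^ (-κ/2 + (2-3*κ)/12)) ^ ((3 : ℝ) / 2 - 5 / 2)
        * (N ^ ((2 - 3 * κ) / 6 + e / 4)) ^ (3 + e / 4 - 5 / 2) * (‖k‖ + 1) ^ (-(3 + e / 4)) :=
        sqrt_setIntegral_sq_voronoiCell_le_of_decay (by positivity) (by norm_num)
          (by have := Real.log_nonneg hN; positivity) hdecay hk (by positivity)
          (Or.inl ⟨hkR, by linarith⟩)
    _ = 8 * 2 ^ ((5 : ℝ) / 2) * C * Real.log N ^ 3 * (N ^ (κ / 4)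
        * (N ^ (-κ/2 + (2-3*κ)/12)) ^ ((3 : ℝ) / 2 - 5 / 2)
        * (N ^ ((2 - 3 * κ) / 6 + e / 4)) ^ (3 + e / 4 - 5 / 2)) * (‖k‖ + 1) ^ (-(3 + e / 4)) := by
        ring
    _ ≤ 8 * 2 ^ ((5 : ℝ) / 2) * C * ((3 / (e / 4)) ^ 3 * N ^ (e / 4)) * (N ^ (κ / 4)
        * (N ^ (-κ/2 + (2-3*κ)/12)) ^ ((3 : ℝ) / 2 - 5 / 2)
        * (N ^ ((2 - 3 * κ) / 6 + e / 4)) ^ (3 + e / 4 - 5 / 2)) * (‖k‖ + 1) ^ (-(3 + e / 4)) := by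
        gcongr
        exact_mod_cast hlog
    _ = 8 * 2 ^ ((5 : ℝ) / 2) * C * (12 / e) ^ 3 * (N ^ (κ / 4)
        * (N ^ (-κ/2 + (2-3*κ)/12)) ^ ((3 : ℝ) / 2 - 5 / 2)
        * (N ^ ((2 - 3 * κ) / 6 + e / 4)) ^ (3 + e / 4 - 5 / 2) * N ^ (e / 4))
        * (‖k‖ + 1) ^ (-(3 + e / 4)) := by
        rw [show (3 : ℝ) / (e / 4) = 12 / e by field_simp; norm_num]
        ring
    _ ≤ _ := by gcongr

lemma sqrt_setIntegral_sq_voronoiCell_le_of_far {κ e N D : ℝ} (hκ1 : 1 / 2 < κ)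
    (hκ2 : κ < 2 / 3) (he0 : 0 < e) (he1 : e ≤ 1) (hN : 1 ≤ N) (hD : 0 ≤ D) {m : ℕ}
    (hm : 12 ≤ e * m) {f : EuclideanSpace ℝ (Fin 3) → ℝ}
    (hf : ∀ x, |f x| ≤ D * N * (N^(-κ/2 + (2-3*κ)/4) / ‖x‖)^m)
    {k : Fin 3 → ℤ} (hk : 6 ≤ ‖k‖ + 1) (hkR : N ^ ((2 - 3 * κ) / 6 + e / 4) ≤ ‖k‖ + 1) :
    √(∫ x in voronoiCell (N^(-κ/2 + (2-3*κ)/12)) k, f x ^ 2)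
      ≤ 8 * 2 ^ (m : ℝ) * D * N ^ (3 * κ / 4 + e) * (‖k‖ + 1) ^ (-(3 + e / 4)) := by
  have hN0 : 0 < N := by linarith
  have hm12 : (12 : ℝ) ≤ m := hm.trans (by nlinarith [(Nat.cast_nonneg m : (0 : ℝ) ≤ m)])
  have hdecay : ∀ x, x ≠ 0 →
      |f x| ≤ D * N ^ (1 + (-κ/2 + (2-3*κ)/4) * m) * ‖x‖ ^ (-(m : ℝ)) := fun x _ =>
    (hf x).trans_eq (by
      rw [div_pow, ← Real.rpow_natCast (N ^ _), ← Real.rpow_mul hN0.le, Real.rpow_add hN0,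
        Real.rpow_one, Real.rpow_neg (norm_nonneg x), Real.rpow_natCast]
      ring)
  have hexp : N ^ (1 + (-κ/2 + (2-3*κ)/4) * m) * (N ^ (-κ/2 + (2-3*κ)/12)) ^ ((3 : ℝ) / 2 - m)
      * (N ^ ((2 - 3 * κ) / 6 + e / 4)) ^ (3 + e / 4 - m) ≤ N ^ (3 * κ / 4 + e) := by
    rw [← Real.rpow_mul hN0.le, ← Real.rpow_mul hN0.le, ← Real.rpow_add hN0,
      ← Real.rpow_add hN0]
    refine Real.rpow_le_rpow_of_exponent_le hN ?_
    nlinarith [mul_le_mul_of_nonneg_right (by linarith : 2 - 3 * κ ≤ 1 / 2) he0.le,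
      mul_le_mul_of_nonneg_right he1 he0.le]
  calc √(∫ x in voronoiCell (N^(-κ/2 + (2-3*κ)/12)) k, f x ^ 2)
      ≤ 8 * 2 ^ (m : ℝ) * (D * N ^ (1 + (-κ/2 + (2-3*κ)/4) * m))
        * (N ^ (-κ/2 + (2-3*κ)/12)) ^ ((3 : ℝ) / 2 - m)
        * (N ^ ((2 - 3 * κ) / 6 + e / 4)) ^ (3 + e / 4 - m) * (‖k‖ + 1) ^ (-(3 + e / 4)) :=
        sqrt_setIntegral_sq_voronoiCell_le_of_decay (by positivity) (by positivity)
          (by positivity) hdecay hk (by positivity) (Or.inr ⟨hkR, by linarith⟩)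
    _ = 8 * 2 ^ (m : ℝ) * D * (N ^ (1 + (-κ/2 + (2-3*κ)/4) * m)
        * (N ^ (-κ/2 + (2-3*κ)/12)) ^ ((3 : ℝ) / 2 - m)
        * (N ^ ((2 - 3 * κ) / 6 + e / 4)) ^ (3 + e / 4 - m)) * (‖k‖ + 1) ^ (-(3 + e / 4)) := by
        ring
    _ ≤ _ := by gcongr

lemma sqrt_setIntegral_sq_voronoiCell_le_rpow_neg {κ C e N : ℝ} (Cm : ℕ → ℝ) (hκ1 : 1 / 2 < κ)
    (hκ2 : κ < 2 / 3) (hC : 0 ≤ C) (he0 : 0 < e) (he1 : e ≤ 1) (hN : 1 ≤ N) {m : ℕ}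
    (hm : 12 ≤ e * m) {f : EuclideanSpace ℝ (Fin 3) → ℝ} (hf : Measurable f)
    (hdecay : ∀ x, |f x| ≤ C * min N ((Real.log N)^3 * N^(κ/4) / ‖x‖^((5:ℝ)/2)))
    (hfast : ∀ x, |f x| ≤ Cm m * N * (N^(-κ/2 + (2-3*κ)/4) / ‖x‖)^m)
    (hL2 : Real.sqrt (∫ x in unitBox, (f x)^2) ≤ C * N^(3*κ/4)) (k : Fin 3 → ℤ) :
    √(∫ x in voronoiCell (N^(-κ/2 + (2-3*κ)/12)) k, f x ^ 2)
      ≤ (6 ^ (3 + e / 4) * C + 8 * 2 ^ ((5 : ℝ) / 2) * C * (12 / e) ^ 3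
          + 8 * 2 ^ (m : ℝ) * max (Cm m) 0) * N ^ (3 * κ / 4 + e) * (‖k‖ + 1) ^ (-(3 + e / 4)) := by
  have hweight : 0 ≤ N ^ (3 * κ / 4 + e) * (‖k‖ + 1) ^ (-(3 + e / 4)) := by positivity
  have hnear : 0 ≤ 6 ^ (3 + e / 4) * C := by positivity
  have hmid : 0 ≤ 8 * 2 ^ ((5 : ℝ) / 2) * C * (12 / e) ^ 3 := by positivity
  have hfar : 0 ≤ 8 * 2 ^ (m : ℝ) * max (Cm m) 0 := by positivity
  rw [mul_assoc]
  rcases le_total (‖k‖ + 1) 6 with hk6 | hk6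
  · have hM : ∀ x, |f x| ≤ C * N := fun x =>
      (hdecay x).trans (mul_le_mul_of_nonneg_left (min_le_left _ _) hC)
    calc _ ≤ 6 ^ (3 + e / 4) * (C * N ^ (3 * κ / 4)) * (‖k‖ + 1) ^ (-(3 + e / 4)) :=
          sqrt_setIntegral_sq_voronoiCell_le_of_near hf hM hL2 (by positivity) _ hk6
      _ = 6 ^ (3 + e / 4) * C * (N ^ (3 * κ / 4) * (‖k‖ + 1) ^ (-(3 + e / 4))) := by ring
      _ ≤ 6 ^ (3 + e / 4) * C * (N ^ (3 * κ / 4 + e) * (‖k‖ + 1) ^ (-(3 + e / 4))) := by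
          gcongr
          linarith
      _ ≤ _ := by gcongr; linarith
  rcases le_total (‖k‖ + 1) (N ^ ((2 - 3 * κ) / 6 + e / 4)) with hkR | hkR
  · calc _ ≤ _ := sqrt_setIntegral_sq_voronoiCell_le_of_mid hκ1 hC he0 he1 hN hdecay hk6 hkR
      _ = 8 * 2 ^ ((5 : ℝ) / 2) * C * (12 / e) ^ 3
            * (N ^ (3 * κ / 4 + e) * (‖k‖ + 1) ^ (-(3 + e / 4))) := by ring
      _ ≤ _ := by gcongr; linarith
  · have hfast' : ∀ x, |f x| ≤ max (Cm m) 0 * N * (N^(-κ/2 + (2-3*κ)/4) / ‖x‖)^m := fun x =>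
      (hfast x).trans (by gcongr; exact le_max_left _ _)
    calc _ ≤ _ := sqrt_setIntegral_sq_voronoiCell_le_of_far hκ1 hκ2 he0 he1 hN
          (le_max_right _ _) hm hfast' hk6 hkR
      _ = 8 * 2 ^ (m : ℝ) * max (Cm m) 0
            * (N ^ (3 * κ / 4 + e) * (‖k‖ + 1) ^ (-(3 + e / 4))) := by ring
      _ ≤ _ := by gcongr; linarith

/-- Localization of an `L²` kernel on boxes of side `ℓ_B = N^{-κ/2+β/12}`:
if `|f(x)| ≤ C min(N, (log N)³ N^{κ/4}/|x|^{5/2})`, `|f(x)| ≤ C_m N (ℓ_σ/|x|)^m`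
for every `m ≥ 2` (`ℓ_σ = N^{-κ/2+β/4}`), and `‖f‖₂ ≤ C N^{3κ/4}`, then for every
`ε > 0` there is `C_ε` with `Σ_{u ∈ Λ_B} ‖f·1_{B_u}‖₂ ≤ C_ε N^{3κ/4+ε}` for all large
`N`, where `β = 2−3κ`, `κ ∈ (1/2, 2/3)`. -/
theorem localized_L2_sum_bound (κ C : ℝ) (hκ1 : 1/2 < κ) (hκ2 : κ < 2/3) (hC : 0 < C)
    (Cm : ℕ → ℝ) (ε : ℝ) (hε : 0 < ε) :
    ∃ Cε : ℝ, 0 < Cε ∧ ∃ N₀ : ℝ, ∀ N : ℝ, N₀ ≤ N →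
      ∀ f : EuclideanSpace ℝ (Fin 3) → ℝ, Measurable f →
        (∀ x, |f x| ≤ C * min N ((Real.log N)^3 * N^(κ/4) / ‖x‖^((5:ℝ)/2))) →
        (∀ m : ℕ, 2 ≤ m → ∀ x,
          |f x| ≤ Cm m * N * (N^(-κ/2 + (2-3*κ)/4) / ‖x‖)^m) →
        Real.sqrt (∫ x in unitBox, (f x)^2) ≤ C * N^(3*κ/4) →
        (∑' u : {k : Fin 3 → ℤ // latPt (N^(-κ/2 + (2-3*κ)/12)) k ∈ unitBox},
            Real.sqrt (∫ x in voronoiCell (N^(-κ/2 + (2-3*κ)/12)) u.1, (f x)^2))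
          ≤ Cε * N^(3*κ/4 + ε) := by
  obtain ⟨e, he0, he1, heε⟩ : ∃ e : ℝ, 0 < e ∧ e ≤ 1 ∧ e ≤ ε :=
    ⟨min ε 1, lt_min hε one_pos, min_le_right _ _, min_le_left _ _⟩
  obtain ⟨m, hm⟩ : ∃ m : ℕ, 12 ≤ e * m :=
    ⟨⌈12 / e⌉₊, by rw [← div_le_iff₀' he0]; exact Nat.le_ceil _⟩
  have hm2 : 2 ≤ m := by
    have : (2 : ℝ) ≤ m := by nlinarith [(Nat.cast_nonneg m : (0 : ℝ) ≤ m)]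
    exact_mod_cast this
  set K := 6 ^ (3 + e / 4) * C + 8 * 2 ^ ((5 : ℝ) / 2) * C * (12 / e) ^ 3
    + 8 * 2 ^ (m : ℝ) * max (Cm m) 0
  set S := ∑' j : ℤ, 1 / |(j : ℝ) + 1 / 2| ^ ((3 + e / 4) / 3)
  have hS : 0 < S := ((Real.summable_one_div_int_add_rpow _ _).2 (by linarith)).tsum_pos
    (fun _ => by positivity) 0 (by norm_num; positivity)
  refine ⟨K * S ^ 3, by positivity, 1, fun N hN f hf hdecay hfast hL2 => ?_⟩
  have hsum := tsum_le_of_le_mul_rpow_neg_norm_add_one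
    (fun k => latPt (N^(-κ/2 + (2-3*κ)/12)) k ∈ unitBox) (fun k => Real.sqrt_nonneg _)
    (by positivity) (by simp only [Fintype.card_fin, Nat.cast_ofNat]; linarith)
    (sqrt_setIntegral_sq_voronoiCell_le_rpow_neg Cm hκ1 hκ2 hC.le he0 he1 hN hm hf hdecay
      (hfast m hm2) hL2)
  simp only [Fintype.card_fin, Nat.cast_ofNat] at hsum
  calc _ ≤ K * N ^ (3 * κ / 4 + e) * S ^ 3 := hsum
    _ ≤ K * S ^ 3 * N ^ (3 * κ / 4 + ε) := by
        rw [mul_right_comm]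
        gcongr
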